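/- (Claim in the proof of Lemma 4.5.) Let n ≥ 4 and let (V₁, …, V_{2(n−1)}) be a positively convex 2(n−1)-gon in ℂ that is centrally symmetric about 0, i.e. V_{j+n−1} = −V_j for all j (indices mod 2(n−1)). Then for every j, the level-(n−2) diagonal-gon is contained in the convex hull of the four points V_j, V_{j+1}, −V_j, −V_{j+1} (the parallelogram with vertices V_j, V_{j+1}, V_{j+n−1}, V_{j+n}). -/

import Mathlib

noncomputable section

/-- The (strict) total order on `ℂ`: compare imaginary parts first, then real parts. -/
def cLt (a b : ℂ) : Prop := a.im < b.im ∨ (a.im = b.im ∧ a.re < b.re)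

/-- The corresponding non-strict order on `ℂ`. -/
def cLe (a b : ℂ) : Prop := cLt a b ∨ a = b

/-- `cross u v = Im (conj u * v)`. -/
def cross (u v : ℂ) : ℝ := ((starRingEnd ℂ) u * v).im

/-- A positively convex `h`-gon: every other vertex lies strictly to the left of each
directed edge from `V (j-1)` to `V j`. -/
def PosConvex {h : ℕ} (V : ZMod h → ℂ) : Prop :=
  ∀ j i : ZMod h, i ≠ j - 1 → i ≠ j →
    0 < cross (V j - V (j - 1)) (V i - V (j - 1))

/-- The (open) level-`s` diagonal-gon of an `h`-gon. -/
def DiagGon {h : ℕ} (V : ZMod h → ℂ) (s : ℕ) : Set ℂ :=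
  {P : ℂ | ∀ j : ZMod h, 0 < cross (V (j + (s : ZMod h)) - V j) (P - V j)}

/-- Edge vectors of an `h`-gon. -/
def zEdge {h : ℕ} (V : ZMod h → ℂ) (j : ZMod h) : ℂ := V j - V (j - 1)

/-- Central symmetry about `0` for a `2(n-1)`-gon. -/
def DSym (n : ℕ) (V : ZMod (2 * (n - 1)) → ℂ) : Prop :=
  ∀ j : ZMod (2 * (n - 1)), V (j + ((n - 1 : ℕ) : ZMod (2 * (n - 1)))) = -V j

/-- A stable `2(n-1)`-gon of type `D_n`, with punctures `B₊ = B` and `B₋ = -B`. -/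
def IsStableDGon (n : ℕ) (V : ZMod (2 * (n - 1)) → ℂ) (B : ℂ) : Prop :=
  PosConvex V ∧ DSym n V ∧ cLe (-B) B ∧
    (-B) ∈ DiagGon V (n - 2) ∧ B ∈ DiagGon V (n - 2)

/-- The `2n` marked points of a type `D_n` gon: the vertices together with the two punctures. -/
def DPoints (n : ℕ) (V : ZMod (2 * (n - 1)) → ℂ) (B : ℂ) :
    ZMod (2 * (n - 1)) ⊕ Fin 2 → ℂ :=
  Sum.elim V (fun b => if b = 0 then B else -B)

/-- `Y 0, Y 1, …, Y (2n-1)` is an increasing enumeration (via the bijection `e`) of the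
`2n` marked points; `Y i` corresponds to the point `Y_{i-n}` (for `0 ≤ i ≤ n-1`) resp.
`Y_{i-n+1}` (for `n ≤ i ≤ 2n-1`) of the paper. -/
def DEnum (n : ℕ) (V : ZMod (2 * (n - 1)) → ℂ) (B : ℂ) (Y : ℕ → ℂ)
    (e : Fin (2 * n) ≃ (ZMod (2 * (n - 1)) ⊕ Fin 2)) : Prop :=
  (∀ m : Fin (2 * n), Y (m : ℕ) = DPoints n V B (e m)) ∧
  (∀ i j : ℕ, i < j → j < 2 * n → cLe (Y i) (Y j))

/-!
In the basis `V j, V (j + 1)`, which is positively oriented because `-V j` lies to the left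
of the edge `V j → V (j + 1)`, the parallelogram is the intersection of the four half-planes
to the left of its edges. Two of these edges, `V (j + 1) → -V j` and `-V (j + 1) → V j`, are
diagonals of level `n - 2`, so points of the diagonal-gon lie to their left by definition.
The other two are the edge `V j → V (j + 1)` and its reflection. A point of the diagonal-gon
lies to the left of the two diagonals through `V j`, towards `-V (j - 1)` and from
`-V (j + 1)`, and convexity of the polygon puts the direction of the edge `V j → V (j + 1)`
strictly between the directions of these diagonals.
-/

theorem cross_eq (u v : ℂ) : cross u v = u.re * v.im - u.im * v.re := by
  simp only [cross, Complex.mul_im, Complex.conj_re, Complex.conj_im]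
  ring

-- Grassmann–Plücker relation
theorem cross_mul_cross (u q r w : ℂ) :
    cross u r * cross q w = cross u q * cross r w + cross q r * cross u w := by
  simp only [cross_eq]
  ring

/-- The hypotheses on `u, q, r` say that `q` lies strictly inside the cone spanned by `u`
and `r`. -/
theorem cross_pos_of_between {u q r w : ℂ} (huq : 0 < cross u q) (hqr : 0 < cross q r)
    (hur : 0 < cross u r) (huw : 0 < cross u w) (hrw : 0 < cross r w) : 0 < cross q w := by
  have h := cross_mul_cross u q r w
  exact pos_of_mul_pos_right (h ▸ by positivity) hur.le

theorem mem_convexHull_of_cross_nonneg {A B P : ℂ} (hAB : 0 < cross A B)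
    (h₁ : 0 ≤ cross (B - A) (P - A)) (h₂ : 0 ≤ cross (-A - B) (P - B))
    (h₃ : 0 ≤ cross (-B - -A) (P - -A)) (h₄ : 0 ≤ cross (A - -B) (P - -B)) :
    P ∈ convexHull ℝ {A, B, -A, -B} := by
  set D := cross A B
  set a := cross P B
  set b := cross A P
  have hCramer : D • P = a • A + b • B := by
    apply Complex.ext <;>
      simp only [Complex.real_smul, Complex.add_re, Complex.add_im, Complex.re_ofReal_mul,
        Complex.im_ofReal_mul, D, a, b, cross_eq] <;>
      ring
  have hab : |a| + |b| ≤ D := by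
    simp only [D, a, b, cross_eq, Complex.sub_re, Complex.sub_im, Complex.neg_re,
      Complex.neg_im] at h₁ h₂ h₃ h₄ ⊢
    cases abs_cases (P.re * B.im - P.im * B.re) <;> cases abs_cases (A.re * P.im - A.im * P.re) <;>
      linarith
  -- Up to the factor `4 * D`, the weights of `A` and `-A` differ by `4 * a`; they are
  -- nonnegative because `|a| + |b| ≤ D`.
  let w : Fin 4 → ℝ := ![D + 2 * a + |a| - |b|, D + 2 * b - |a| + |b|,
    D - 2 * a + |a| - |b|, D - 2 * b - |a| + |b|]
  let z : Fin 4 → ℂ := ![A, B, -A, -B]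
  have hw : ∀ i ∈ Finset.univ, 0 ≤ w i := by
    intro i _
    fin_cases i <;> simp only [w, Fin.reduceFinMk, Matrix.cons_val] <;>
      linarith [neg_abs_le a, neg_abs_le b, le_abs_self a, le_abs_self b]
  have hsum : ∑ i, w i = 4 * D := by
    simp only [w, Fin.sum_univ_four, Matrix.cons_val]
    ring
  have hP : Finset.univ.centerMass w z = P := by
    rw [Finset.centerMass, hsum, inv_smul_eq_iff₀ (by positivity)]
    simp only [w, z, Fin.sum_univ_four, Matrix.cons_val]
    linear_combination (norm := module) (-4 : ℝ) • hCramer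
  rw [← hP]
  refine Finset.univ.centerMass_mem_convexHull hw (by rw [hsum]; positivity) fun i _ => ?_
  fin_cases i <;> simp [z]

theorem ZMod.natCast_ne_zero_of_pos_of_lt {N k : ℕ} (hk₀ : 0 < k) (hk : k < N) :
    (k : ZMod N) ≠ 0 := by
  rw [Ne, ZMod.natCast_eq_zero_iff]
  exact fun h => absurd (Nat.le_of_dvd hk₀ h) (by omega)

theorem PosConvex.cross_edge_vertex_pos {h : ℕ} {V : ZMod h → ℂ} (hV : PosConvex V)
    (j : ZMod h) {k : ℕ} (hk₀ : 0 < k) (hk : k + 1 < h) :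
    0 < cross (V (j + 1) - V j) (V (j + 1 + k) - V j) := by
  have hV := hV (j + 1) (j + 1 + k)
  rw [add_sub_cancel_right] at hV
  refine hV (fun h' => ZMod.natCast_ne_zero_of_pos_of_lt (k := k + 1) (by omega) hk ?_)
    (fun h' => ZMod.natCast_ne_zero_of_pos_of_lt (N := h) hk₀ (by omega) ?_)
  · push_cast
    linear_combination h'
  · linear_combination h'

section Symmetric

variable {m : ℕ} {V : ZMod (2 * m) → ℂ}

theorem PosConvex.cross_succ_pos_of_neg_symm (hm : 2 ≤ m) (hV : PosConvex V)
    (hsym : ∀ j, V (j + m) = -V j) (j : ZMod (2 * m)) : 0 < cross (V j) (V (j + 1)) := by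
  have h := hV.cross_edge_vertex_pos j (k := m - 1) (by omega) (by omega)
  rw [Nat.cast_pred (by omega), show j + 1 + ((m : ZMod (2 * m)) - 1) = j + m by ring,
    hsym] at h
  simp only [cross_eq, Complex.sub_re, Complex.sub_im, Complex.neg_re, Complex.neg_im] at h ⊢
  linarith

theorem cross_diag_pos_of_mem_diagGon (hm : 1 ≤ m) (hsym : ∀ j, V (j + m) = -V j) {P : ℂ}
    (hP : P ∈ DiagGon V (m - 1)) (j : ZMod (2 * m)) :
    0 < cross (-V j - V (j + 1)) (P - V (j + 1)) := by
  have h := hP (j + 1)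
  rwa [Nat.cast_pred hm, show j + 1 + ((m : ZMod (2 * m)) - 1) = j + m by ring, hsym] at h

theorem PosConvex.cross_edge_pos_of_mem_diagGon (hm : 3 ≤ m) (hV : PosConvex V)
    (hsym : ∀ j, V (j + m) = -V j) {P : ℂ} (hP : P ∈ DiagGon V (m - 1)) (j : ZMod (2 * m)) :
    0 < cross (V (j + 1) - V j) (P - V j) := by
  have hD := hV.cross_succ_pos_of_neg_symm (by omega) hsym j
  have hprev : 0 < cross (V (j + 1) - V j) (-V (j - 1) - V j) := by
    have h := hV.cross_edge_vertex_pos j (k := m - 2) (by omega) (by omega)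
    rwa [Nat.cast_sub (by omega), show j + 1 + ((m : ZMod (2 * m)) - (2 : ℕ)) = j - 1 + m by
      push_cast; ring, hsym] at h
  have hnext : 0 < cross (V j - V (j - 1)) (-V (j + 1) - V (j - 1)) := by
    have h := hV.cross_edge_vertex_pos (j - 1) (k := m + 1) (by omega) (by omega)
    rwa [sub_add_cancel, Nat.cast_succ, show j + ((m : ZMod (2 * m)) + 1) = j + 1 + m by ring,
      hsym] at h
  have hdiag := cross_diag_pos_of_mem_diagGon (by omega) hsym hP (j - 1)
  rw [sub_add_cancel] at hdiag
  have hdiag' := cross_diag_pos_of_mem_diagGon (by omega) hsym hP (j + m)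
  rw [hsym, add_right_comm, hsym] at hdiag'
  refine cross_pos_of_between (u := V j + V (j + 1)) ?_ hprev ?_ ?_ hdiag <;>
    simp only [cross_eq, Complex.add_re, Complex.add_im, Complex.sub_re, Complex.sub_im,
      Complex.neg_re, Complex.neg_im] at hD hnext hdiag' ⊢ <;>
    linarith

end Symmetric

/-- (Claim in the proof of Lemma 4.5.) For a centrally symmetric positively convex
`2(n-1)`-gon, the level-`(n-2)` diagonal-gon is contained in each parallelogram with
vertices `V j, V (j+1), -V j, -(V (j+1))`. -/
theorem diagGon_subset_parallelogram (n : ℕ) (hn : 4 ≤ n)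
    (V : ZMod (2 * (n - 1)) → ℂ) (hpc : PosConvex V) (hsym : DSym n V) :
    ∀ j : ZMod (2 * (n - 1)),
      DiagGon V (n - 2) ⊆
        convexHull ℝ ({V j, V (j + 1), -V j, -(V (j + 1))} : Set ℂ) := by
  intro j P hP
  rw [show n - 2 = n - 1 - 1 by omega] at hP
  unfold DSym at hsym
  have hedge := hpc.cross_edge_pos_of_mem_diagGon (by omega) hsym hP
  have hdiag := cross_diag_pos_of_mem_diagGon (by omega) hsym hP
  have hedge_opp := hedge (j + (n - 1 : ℕ))
  rw [add_right_comm, hsym, hsym] at hedge_opp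
  have hdiag_opp := hdiag (j + (n - 1 : ℕ))
  rw [add_right_comm, hsym, hsym, neg_neg] at hdiag_opp
  exact mem_convexHull_of_cross_nonneg (hpc.cross_succ_pos_of_neg_symm (by omega) hsym j)
    (hedge j).le (hdiag j).le hedge_opp.le hdiag_opp.le
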